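/- arXiv:1704.03943 — 4 statements merged into one kernel-verified Lean document; each statement's English description precedes it below -/
import Mathlib

section
/- In a finite simple undirected graph G, the number of subgraphs consisting of a triangle with two pendant edges attached at the same vertex (S_{T2S}) equals (1/4)·Σ_i (k_i − 2)(k_i − 3)·(A³)_{ii}. -/
open Finset BigOperators Matrix SimpleGraph

noncomputable section

variable {V : Type*} [Fintype V] [DecidableEq V]

/-- Number of labelled (ordered) paths with `n` edges (`n+1` distinct vertices). -/
def labPath (G : SimpleGraph V) [DecidableRel G.Adj] (n : ℕ) : ℕ :=
  (univ.filter (fun f : Fin (n + 1) → V =>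
    Function.Injective f ∧ ∀ i : Fin n, G.Adj (f i.castSucc) (f i.succ))).card

/-- Number of edges, as a real number. -/
def p1 (G : SimpleGraph V) [DecidableRel G.Adj] : ℝ := G.edgeFinset.card

/-- Number of paths of length two (`P_2`, path on 3 vertices). -/
def p2 (G : SimpleGraph V) [DecidableRel G.Adj] : ℝ := (labPath G 2 : ℝ) / 2

/-- Number of paths of length three (`P_3`, path on 4 vertices). -/
def p3 (G : SimpleGraph V) [DecidableRel G.Adj] : ℝ := (labPath G 3 : ℝ) / 2

/-- Number of paths of length four (`P_4`, path on 5 vertices). -/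
def p4 (G : SimpleGraph V) [DecidableRel G.Adj] : ℝ := (labPath G 4 : ℝ) / 2

/-- Number of triangles. -/
def c3 (G : SimpleGraph V) [DecidableRel G.Adj] : ℝ :=
  ((univ.filter (fun f : Fin 3 → V => Function.Injective f ∧
    G.Adj (f 0) (f 1) ∧ G.Adj (f 1) (f 2) ∧ G.Adj (f 2) (f 0))).card : ℝ) / 6

/-- Number of 4-cycles. -/
def c4 (G : SimpleGraph V) [DecidableRel G.Adj] : ℝ :=
  ((univ.filter (fun f : Fin 4 → V => Function.Injective f ∧
    G.Adj (f 0) (f 1) ∧ G.Adj (f 1) (f 2) ∧ G.Adj (f 2) (f 3) ∧ G.Adj (f 3) (f 0))).card : ℝ) / 8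

/-- Number of 5-cycles. -/
def c5 (G : SimpleGraph V) [DecidableRel G.Adj] : ℝ :=
  ((univ.filter (fun f : Fin 5 → V => Function.Injective f ∧
    G.Adj (f 0) (f 1) ∧ G.Adj (f 1) (f 2) ∧ G.Adj (f 2) (f 3) ∧ G.Adj (f 3) (f 4) ∧
    G.Adj (f 4) (f 0))).card : ℝ) / 10

/-- Number of stars `S_{1,3}`: a center `f 0` adjacent to three leaves. -/
def s13 (G : SimpleGraph V) [DecidableRel G.Adj] : ℝ :=
  ((univ.filter (fun f : Fin 4 → V => Function.Injective f ∧
    G.Adj (f 0) (f 1) ∧ G.Adj (f 0) (f 2) ∧ G.Adj (f 0) (f 3))).card : ℝ) / 6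

/-- Number of tadpoles `S_{T1S}`: a triangle `f 0, f 1, f 2` with one pendant edge `f 0 – f 3`. -/
def sT1S (G : SimpleGraph V) [DecidableRel G.Adj] : ℝ :=
  ((univ.filter (fun f : Fin 4 → V => Function.Injective f ∧
    G.Adj (f 0) (f 1) ∧ G.Adj (f 1) (f 2) ∧ G.Adj (f 2) (f 0) ∧
    G.Adj (f 0) (f 3))).card : ℝ) / 2

/-- Number of `S_{T2S}`: a triangle `f 0, f 1, f 2` with two pendant edges at `f 0`. -/
def sT2S (G : SimpleGraph V) [DecidableRel G.Adj] : ℝ :=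
  ((univ.filter (fun f : Fin 5 → V => Function.Injective f ∧
    G.Adj (f 0) (f 1) ∧ G.Adj (f 1) (f 2) ∧ G.Adj (f 2) (f 0) ∧
    G.Adj (f 0) (f 3) ∧ G.Adj (f 0) (f 4))).card : ℝ) / 4

/-- Number of `S_Y` (the 'chair'/fork tree on 5 vertices): an edge `f 0 – f 1`,
two further neighbours `f 2, f 3` of `f 0` and one further neighbour `f 4` of `f 1`. -/
def sY (G : SimpleGraph V) [DecidableRel G.Adj] : ℝ :=
  ((univ.filter (fun f : Fin 5 → V => Function.Injective f ∧
    G.Adj (f 0) (f 1) ∧ G.Adj (f 0) (f 2) ∧ G.Adj (f 0) (f 3) ∧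
    G.Adj (f 1) (f 4))).card : ℝ) / 2

private lemma pair_count (s : Finset V) :
    ∑ c : V, ∑ d : V, (if c ∈ s ∧ d ∈ s ∧ c ≠ d then (1:ℝ) else 0)
      = (s.card : ℝ) * ((s.card : ℝ) - 1) := by
  have h : ∀ c : V, ∑ d : V, (if c ∈ s ∧ d ∈ s ∧ c ≠ d then (1:ℝ) else 0)
      = if c ∈ s then ((s.card : ℝ) - 1) else 0 := by
    intro c
    by_cases hc : c ∈ s
    · simp only [hc, true_and, if_true]
      have : ∑ d : V, (if d ∈ s ∧ c ≠ d then (1:ℝ) else 0)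
          = ((univ.filter (fun d => d ∈ s ∧ c ≠ d)).card : ℝ) := by
        rw [Finset.card_filter]; push_cast; simp
      rw [this]
      have he : univ.filter (fun d => d ∈ s ∧ c ≠ d) = s.erase c := by
        ext d; simp [Finset.mem_erase, and_comm, eq_comm, ne_comm]
      rw [he, Finset.card_erase_of_mem hc, Nat.cast_sub (Finset.card_pos.2 ⟨c, hc⟩)]
      simp
    · simp [hc]
  rw [Finset.sum_congr rfl (fun c _ => h c)]
  rw [Finset.sum_ite_mem, Finset.univ_inter, Finset.sum_const]
  simp [mul_comm]


private lemma cube_diag (G : SimpleGraph V) [DecidableRel G.Adj] (v : V) :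
    (G.adjMatrix ℝ ^ 3) v v
      = ∑ a, ∑ b, (if G.Adj v a ∧ G.Adj a b ∧ G.Adj b v then (1:ℝ) else 0) := by
  have : (G.adjMatrix ℝ ^ 3) v v
      = ∑ b, (∑ a, G.adjMatrix ℝ v a * G.adjMatrix ℝ a b) * G.adjMatrix ℝ b v := by
    rw [pow_succ, Matrix.mul_apply]
    refine Finset.sum_congr rfl fun b _ => ?_
    rw [sq, Matrix.mul_apply]
  rw [this]
  simp only [Finset.sum_mul]
  rw [Finset.sum_comm]
  refine Finset.sum_congr rfl fun a _ => Finset.sum_congr rfl fun b _ => ?_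
  simp only [SimpleGraph.adjMatrix_apply, ite_mul, one_mul, zero_mul, mul_ite, mul_one, mul_zero]
  by_cases h1 : G.Adj v a <;> by_cases h2 : G.Adj a b <;> by_cases h3 : G.Adj b v <;>
    simp [h1, h2, h3]

private lemma card_quint (G : SimpleGraph V) [DecidableRel G.Adj] :
    (univ.filter (fun f : Fin 5 → V => Function.Injective f ∧
      G.Adj (f 0) (f 1) ∧ G.Adj (f 1) (f 2) ∧ G.Adj (f 2) (f 0) ∧
      G.Adj (f 0) (f 3) ∧ G.Adj (f 0) (f 4))).card
    = (univ.filter (fun q : V × V × V × V × V =>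
        G.Adj q.1 q.2.1 ∧ G.Adj q.2.1 q.2.2.1 ∧ G.Adj q.2.2.1 q.1 ∧
        q.2.2.2.1 ∈ ((G.neighborFinset q.1).erase q.2.1).erase q.2.2.1 ∧
        q.2.2.2.2 ∈ ((G.neighborFinset q.1).erase q.2.1).erase q.2.2.1 ∧
        q.2.2.2.1 ≠ q.2.2.2.2)).card := by
  apply Finset.card_bij' (fun f _ => (f 0, f 1, f 2, f 3, f 4))
    (fun q _ => ![q.1, q.2.1, q.2.2.1, q.2.2.2.1, q.2.2.2.2])
  · rintro f hf
    simp only [Finset.mem_filter, Finset.mem_univ, true_and] at hf ⊢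
    obtain ⟨hinj, h01, h12, h20, h03, h04⟩ := hf
    refine ⟨h01, h12, h20, ?_, ?_, hinj.ne (by decide)⟩ <;>
      simp only [Finset.mem_erase, SimpleGraph.mem_neighborFinset] <;>
      exact ⟨hinj.ne (by decide), hinj.ne (by decide), by assumption⟩
  · rintro ⟨v, a, b, c, d⟩ hq
    simp only [Finset.mem_filter, Finset.mem_univ, true_and, Finset.mem_erase,
      SimpleGraph.mem_neighborFinset] at hq ⊢
    obtain ⟨hva, hab, hbv, ⟨hcb, hca, hvc⟩, ⟨hdb, hda, hvd⟩, hcd⟩ := hq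
    have hvna := hva.ne
    have hanb := hab.ne
    have hbnv := hbv.ne
    have hvnc := hvc.ne
    have hvnd := hvd.ne
    refine ⟨?_, by simpa using hva, by simpa using hab, by simpa using hbv,
      by simpa using hvc, by simpa using hvd⟩
    intro i j h
    fin_cases i <;> fin_cases j <;> simp_all
  · intro f _; funext i; fin_cases i <;> rfl
  · rintro ⟨v, a, b, c, d⟩ _; rfl

private lemma quint_sum (G : SimpleGraph V) [DecidableRel G.Adj] :
    ((univ.filter (fun q : V × V × V × V × V =>
        G.Adj q.1 q.2.1 ∧ G.Adj q.2.1 q.2.2.1 ∧ G.Adj q.2.2.1 q.1 ∧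
        q.2.2.2.1 ∈ ((G.neighborFinset q.1).erase q.2.1).erase q.2.2.1 ∧
        q.2.2.2.2 ∈ ((G.neighborFinset q.1).erase q.2.1).erase q.2.2.1 ∧
        q.2.2.2.1 ≠ q.2.2.2.2)).card : ℝ)
    = ∑ v, ((G.degree v : ℝ) - 2) * ((G.degree v : ℝ) - 3) * (G.adjMatrix ℝ ^ 3) v v := by
  have expand : ((univ.filter (fun q : V × V × V × V × V =>
        G.Adj q.1 q.2.1 ∧ G.Adj q.2.1 q.2.2.1 ∧ G.Adj q.2.2.1 q.1 ∧
        q.2.2.2.1 ∈ ((G.neighborFinset q.1).erase q.2.1).erase q.2.2.1 ∧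
        q.2.2.2.2 ∈ ((G.neighborFinset q.1).erase q.2.1).erase q.2.2.1 ∧
        q.2.2.2.1 ≠ q.2.2.2.2)).card : ℝ)
      = ∑ v : V, ∑ a : V, ∑ b : V, ∑ c : V, ∑ d : V,
        (if G.Adj v a ∧ G.Adj a b ∧ G.Adj b v ∧
          c ∈ ((G.neighborFinset v).erase a).erase b ∧
          d ∈ ((G.neighborFinset v).erase a).erase b ∧ c ≠ d then (1:ℝ) else 0) := by
    rw [Finset.card_filter]
    push_cast
    rw [Fintype.sum_prod_type]
    refine Finset.sum_congr rfl fun v _ => ?_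
    rw [Fintype.sum_prod_type]
    refine Finset.sum_congr rfl fun a _ => ?_
    rw [Fintype.sum_prod_type]
    refine Finset.sum_congr rfl fun b _ => ?_
    rw [Fintype.sum_prod_type]
  rw [expand]
  refine Finset.sum_congr rfl fun v _ => ?_
  have step : ∀ a b : V, ∑ c : V, ∑ d : V,
      (if G.Adj v a ∧ G.Adj a b ∧ G.Adj b v ∧
        c ∈ ((G.neighborFinset v).erase a).erase b ∧
        d ∈ ((G.neighborFinset v).erase a).erase b ∧ c ≠ d then (1:ℝ) else 0)
      = (if G.Adj v a ∧ G.Adj a b ∧ G.Adj b v then (1:ℝ) else 0)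
        * (((G.degree v : ℝ) - 2) * ((G.degree v : ℝ) - 3)) := by
    intro a b
    by_cases htri : G.Adj v a ∧ G.Adj a b ∧ G.Adj b v
    · obtain ⟨h1, h2, h3⟩ := htri
      have ha : a ∈ G.neighborFinset v := by simpa using h1
      have hb : b ∈ (G.neighborFinset v).erase a :=
        Finset.mem_erase.2 ⟨h2.ne', by simpa using h3.symm⟩
      have h2le : 2 ≤ G.degree v := by
        rw [← SimpleGraph.card_neighborFinset_eq_degree]
        exact Finset.one_lt_card.2 ⟨a, ha, b, (Finset.mem_erase.1 hb).2, h2.ne⟩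
      have hcard : ((((G.neighborFinset v).erase a).erase b).card : ℝ)
          = (G.degree v : ℝ) - 2 := by
        rw [Finset.card_erase_of_mem hb, Finset.card_erase_of_mem ha,
          SimpleGraph.card_neighborFinset_eq_degree]
        have h' : G.degree v - 1 - 1 = G.degree v - 2 := by omega
        rw [h', Nat.cast_sub h2le]
        norm_num
      have hre : ∀ c d : V, (G.Adj v a ∧ G.Adj a b ∧ G.Adj b v ∧
          c ∈ ((G.neighborFinset v).erase a).erase b ∧
          d ∈ ((G.neighborFinset v).erase a).erase b ∧ c ≠ d)
          ↔ (c ∈ ((G.neighborFinset v).erase a).erase b ∧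
          d ∈ ((G.neighborFinset v).erase a).erase b ∧ c ≠ d) := by
        intro c d; simp [h1, h2, h3]
      rw [Finset.sum_congr rfl (fun c _ => Finset.sum_congr rfl (fun d _ => by
        rw [if_congr (hre c d) rfl rfl]))]
      rw [pair_count, hcard, if_pos ⟨h1, h2, h3⟩]
      ring
    · rw [if_neg htri, zero_mul]
      refine Finset.sum_eq_zero fun c _ => Finset.sum_eq_zero fun d _ => by
        rw [if_neg]; tauto
  rw [Finset.sum_congr rfl (fun a _ => Finset.sum_congr rfl (fun b _ => step a b))]
  rw [cube_diag, Finset.mul_sum]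
  refine Finset.sum_congr rfl fun a _ => ?_
  rw [Finset.mul_sum]
  exact Finset.sum_congr rfl fun b _ => by ring

/-- `|S_{T2S}| = (1/4)·Σ_i (k_i − 2)(k_i − 3)·(A³)_{ii}`. -/
theorem sT2S_eq (G : SimpleGraph V) [DecidableRel G.Adj] :
    sT2S G = (1 / 4) * ∑ i, ((G.degree i : ℝ) - 2) * ((G.degree i : ℝ) - 3)
      * (G.adjMatrix ℝ ^ 3) i i := by
  unfold sT2S
  rw [card_quint, quint_sum]
  ring
end
end

section
/- In a finite simple undirected graph G, the number of subgraphs S_Y (a path on 4 vertices with an extra pendant edge at one internal vertex, i.e., the 'chair'/fork obtained from an edge (i,j) by attaching two further neighbors to i and one further neighbor to j, all five vertices distinct and spanning no extra edges counted) satisfies |S_Y| = Σ_{(i,j)∈E} [ C(k_i−1, 2)·(k_j−1) + C(k_j−1, 2)·(k_i−1) ] − 2|S_{T1S}|, where |S_{T1S}| is the number of triangles with one pendant edge. -/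
/-!
Label `S_Y` by `0, …, 4` with edges `01, 02, 03, 14`, and count the maps `f` from these labels to
`V` that send edges to edges and are injective on each neighbourhood (`f 1, f 2, f 3` distinct
and `f 0 ≠ f 4`). Fixing the ordered edge `(f 0, f 1) = (a, b)` leaves `(k_a - 1)(k_a - 2)`
choices for `(f 2, f 3)` and `k_b - 1` for `f 4`, so there are
`∑_{a ~ b} (k_a - 1)(k_a - 2)(k_b - 1)` such maps, twice the edge sum of the statement. Such a
map is injective unless `f 4 = f 2` or `f 4 = f 3`, and then `f 0, f 1, f 4` is a triangle with a
pendant edge at `f 0`: each of the two cases is in bijection with the labelled tadpoles. Both `S_Y` and `S_{T1S}` have two automorphisms,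
so `2 |S_Y| + 2 · 2 |S_{T1S}|` equals that sum.
-/

open Finset BigOperators Matrix SimpleGraph

noncomputable section

variable {V : Type*} [Fintype V] [DecidableEq V]

theorem Finset.cast_card_offDiag_erase {α R : Type*} [DecidableEq α] [CommRing R]
    {s : Finset α} {x : α} (hx : x ∈ s) :
    (#(s.erase x).offDiag : R) = (#s - 1) * (#s - 2) := by
  rw [offDiag_card, Nat.cast_sub (Nat.le_mul_self _), Nat.cast_mul, cast_card_erase_of_mem hx]
  ring

namespace SimpleGraph

variable (G : SimpleGraph V) [DecidableRel G.Adj]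

theorem sum_edgeFinset_lift_add_swap {M : Type*} [AddCommMonoid M] (X : V → V → M) :
    ∑ e ∈ G.edgeFinset, Sym2.lift ⟨fun a b => X a b + X b a, fun _ _ => add_comm _ _⟩ e =
      ∑ p ∈ univ.filter (fun p : V × V => G.Adj p.1 p.2), X p.1 p.2 := by
  rw [← sum_fiberwise_of_maps_to (g := fun p : V × V => s(p.1, p.2)) (t := G.edgeFinset)
    (fun p hp => by simpa using hp)]
  refine sum_congr rfl fun e he => ?_
  induction e using Sym2.ind with
  | _ a b =>
    have hab : G.Adj a b := by simpa using he
    have fiber : {p ∈ univ.filter (fun p : V × V => G.Adj p.1 p.2) | s(p.1, p.2) = s(a, b)} =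
        {(a, b), (b, a)} := by
      ext ⟨x, y⟩
      simp only [mem_filter, mem_univ, true_and, Sym2.eq_iff, mem_insert, mem_singleton,
        Prod.mk.injEq]
      constructor
      · exact fun h => h.2
      · rintro (⟨rfl, rfl⟩ | ⟨rfl, rfl⟩)
        exacts [⟨hab, .inl ⟨rfl, rfl⟩⟩, ⟨hab.symm, .inr ⟨rfl, rfl⟩⟩]
    rw [fiber, sum_pair (by simp [hab.ne])]
    rfl

def IsLocallyInjectiveY (f : Fin 5 → V) : Prop :=
  G.Adj (f 0) (f 1) ∧ G.Adj (f 0) (f 2) ∧ G.Adj (f 0) (f 3) ∧ G.Adj (f 1) (f 4) ∧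
    f 1 ≠ f 2 ∧ f 1 ≠ f 3 ∧ f 2 ≠ f 3 ∧ f 0 ≠ f 4

instance : DecidablePred (IsLocallyInjectiveY G) := fun _ => by
  unfold IsLocallyInjectiveY; infer_instance

theorem card_isLocallyInjectiveY_fiber {a b : V} (hab : G.Adj a b) :
    #{f ∈ univ.filter (IsLocallyInjectiveY G) | (f 0, f 1) = (a, b)} =
      #(((G.neighborFinset a).erase b).offDiag ×ˢ (G.neighborFinset b).erase a) := by
  refine card_nbij' (fun f => ((f 2, f 3), f 4)) (fun q => ![a, b, q.1.1, q.1.2, q.2])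
    ?_ ?_ ?_ (fun _ _ => rfl)
  · rintro f hf
    simp only [mem_coe, mem_filter, mem_univ, true_and, Prod.mk.injEq,
      IsLocallyInjectiveY] at hf
    obtain ⟨⟨-, h02, h03, h14, h12, h13, h23, h04⟩, rfl, rfl⟩ := hf
    simp [h02, h03, h14, h12.symm, h13.symm, h23, h04.symm]
  · rintro ⟨⟨c, d⟩, e⟩ hq
    simp only [coe_product, Set.mem_prod, mem_coe, mem_offDiag, mem_erase,
      mem_neighborFinset] at hq
    obtain ⟨⟨⟨hcb, hac⟩, ⟨hdb, had⟩, hcd⟩, hea, hbe⟩ := hq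
    simp [IsLocallyInjectiveY, hab, hac, had, hbe, hcb.symm, hdb.symm, hcd, hea.symm]
  · rintro f hf
    simp only [mem_coe, mem_filter, Prod.mk.injEq] at hf
    ext i
    fin_cases i <;> simp [hf.2.1, hf.2.2]

theorem cast_card_isLocallyInjectiveY :
    (#(univ.filter (IsLocallyInjectiveY G)) : ℝ) =
      ∑ p ∈ univ.filter (fun p : V × V => G.Adj p.1 p.2),
        ((G.degree p.1 : ℝ) - 1) * ((G.degree p.1 : ℝ) - 2) * ((G.degree p.2 : ℝ) - 1) := by
  rw [card_eq_sum_card_fiberwise (f := fun f => (f 0, f 1))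
    (t := univ.filter (fun p : V × V => G.Adj p.1 p.2))
    (fun f hf => by simp_all [IsLocallyInjectiveY]), Nat.cast_sum]
  refine sum_congr rfl fun ⟨a, b⟩ hp => ?_
  have hab : G.Adj a b := by simpa using hp
  rw [card_isLocallyInjectiveY_fiber G hab, card_product, Nat.cast_mul,
    cast_card_offDiag_erase (by simpa using hab), cast_card_erase_of_mem (by simpa using hab.symm),
    card_neighborFinset_eq_degree, card_neighborFinset_eq_degree]

theorem filter_isLocallyInjectiveY_ne_ne :
    ((univ.filter (IsLocallyInjectiveY G)).filter fun f => ¬f 4 = f 2).filter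
        (fun f => ¬f 4 = f 3) =
      univ.filter (fun f : Fin 5 → V => Function.Injective f ∧
        G.Adj (f 0) (f 1) ∧ G.Adj (f 0) (f 2) ∧ G.Adj (f 0) (f 3) ∧ G.Adj (f 1) (f 4)) := by
  ext f
  -- `List.nodup_ofFn` spells out injectivity of a tuple as its pairwise inequalities
  simp only [mem_filter, mem_univ, true_and, IsLocallyInjectiveY, ← List.nodup_ofFn]
  simp [List.ofFn_succ]
  grind [Adj.ne]

theorem card_isLocallyInjectiveY_and_eq_two :
    #((univ.filter (IsLocallyInjectiveY G)).filter (fun f => f 4 = f 2)) =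
      #(univ.filter (fun f : Fin 4 → V => Function.Injective f ∧
        G.Adj (f 0) (f 1) ∧ G.Adj (f 1) (f 2) ∧ G.Adj (f 2) (f 0) ∧ G.Adj (f 0) (f 3))) := by
  refine card_nbij' (fun f => ![f 0, f 1, f 2, f 3]) (fun g => ![g 0, g 1, g 2, g 3, g 2])
    ?_ ?_ ?_ ?_
  · intro f hf
    simp only [mem_coe, mem_filter, mem_univ, true_and, IsLocallyInjectiveY,
      ← List.nodup_ofFn] at hf ⊢
    simp [List.ofFn_succ] at hf ⊢
    grind [Adj.ne, Adj.symm]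
  · intro g hg
    simp only [mem_coe, mem_filter, mem_univ, true_and, IsLocallyInjectiveY,
      ← List.nodup_ofFn] at hg ⊢
    simp [List.ofFn_succ] at hg ⊢
    grind [Adj.ne, Adj.symm]
  · intro f hf
    simp only [mem_coe, mem_filter] at hf
    ext i
    fin_cases i <;> simp [hf.2]
  · intro g _
    ext i
    fin_cases i <;> simp

theorem card_isLocallyInjectiveY_and_eq_three :
    #((univ.filter (IsLocallyInjectiveY G)).filter (fun f => f 4 = f 3)) =
      #((univ.filter (IsLocallyInjectiveY G)).filter (fun f => f 4 = f 2)) := by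
  have comp_swap (f : Fin 5 → V) :
      IsLocallyInjectiveY G (f ∘ Equiv.swap 2 3) ↔ IsLocallyInjectiveY G f := by
    simp [IsLocallyInjectiveY, Equiv.swap_apply_of_ne_of_ne]
    grind
  refine card_nbij' (· ∘ Equiv.swap 2 3) (· ∘ Equiv.swap 2 3) ?_ ?_ ?_ ?_ <;> intro f hf
  · simpa [comp_swap, Equiv.swap_apply_of_ne_of_ne] using hf
  · simpa [comp_swap, Equiv.swap_apply_of_ne_of_ne] using hf
  all_goals ext i; simp

theorem card_isLocallyInjectiveY_eq :
    #(univ.filter (IsLocallyInjectiveY G)) =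
      #(univ.filter (fun f : Fin 5 → V => Function.Injective f ∧
        G.Adj (f 0) (f 1) ∧ G.Adj (f 0) (f 2) ∧ G.Adj (f 0) (f 3) ∧ G.Adj (f 1) (f 4))) +
      2 * #(univ.filter (fun f : Fin 4 → V => Function.Injective f ∧
        G.Adj (f 0) (f 1) ∧ G.Adj (f 1) (f 2) ∧ G.Adj (f 2) (f 0) ∧ G.Adj (f 0) (f 3))) := by
  set S := univ.filter (IsLocallyInjectiveY G)
  have hne : (S.filter fun f => ¬f 4 = f 2).filter (fun f => f 4 = f 3) =
      S.filter fun f => f 4 = f 3 := by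
    rw [filter_filter]
    refine filter_congr fun f hf => ?_
    obtain ⟨-, -, -, -, -, -, h23, -⟩ := (mem_filter.1 hf).2
    grind
  rw [← card_filter_add_card_filter_not (s := S) (fun f => f 4 = f 2),
    ← card_filter_add_card_filter_not (s := S.filter fun f => ¬f 4 = f 2) (fun f => f 4 = f 3),
    hne, filter_isLocallyInjectiveY_ne_ne, card_isLocallyInjectiveY_and_eq_three,
    card_isLocallyInjectiveY_and_eq_two]
  ring

end SimpleGraph

/-- `|S_Y| = Σ_{(i,j)∈E} [ C(k_i−1,2)(k_j−1) + C(k_j−1,2)(k_i−1) ] − 2|S_{T1S}|`. -/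
theorem sY_eq (G : SimpleGraph V) [DecidableRel G.Adj] :
    sY G = (∑ e ∈ G.edgeFinset,
        Sym2.lift ⟨fun i j =>
          ((G.degree i : ℝ) - 1) * ((G.degree i : ℝ) - 2) / 2 * ((G.degree j : ℝ) - 1)
          + ((G.degree j : ℝ) - 1) * ((G.degree j : ℝ) - 2) / 2 * ((G.degree i : ℝ) - 1),
          fun i j => by ring⟩ e) - 2 * sT1S G := by
  have hcount := congrArg (Nat.cast : ℕ → ℝ) G.card_isLocallyInjectiveY_eq
  rw [G.cast_card_isLocallyInjectiveY, Nat.cast_add, Nat.cast_mul, Nat.cast_ofNat] at hcount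
  rw [G.sum_edgeFinset_lift_add_swap]
  simp_rw [div_mul_eq_mul_div, ← sum_div]
  unfold sY sT1S
  linarith
end
end

section
/- Let G be a finite simple graph. Then Σ_{(i,j)∈E} (k̃_i + k̃_j) = 2|P_1| + 4|P_2| + 2|P_3| + 6|C_3|, where |P_1|, |P_2|, |P_3| are the numbers of edges, paths of length two, and paths of length three, respectively, |C_3| is the number of triangles, k̃_i is the two-walks degree of vertex i, and the sum is over undirected edges. -/
open Finset BigOperators Matrix SimpleGraph

noncomputable section

variable {V : Type*} [Fintype V] [DecidableEq V]

/-! Summing `k̃_i + k̃_j` over the edges counts every ordered adjacent pair `(i, j)` with weight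
`k̃_j`, so the left side is `1ᵀA³1`, the number of walks `v₀v₁v₂v₃`. Such a walk either runs back
and forth along one edge (two per edge), backtracks only at its second or only at its third step
(a labelled `P₂` each time), closes into a triangle (six per triangle), or has four distinct
vertices and is a labelled `P₃` (two per path). -/

theorem injective_fin_three_iff {α : Type*} (f : Fin 3 → α) :
    Function.Injective f ↔ f 0 ≠ f 1 ∧ f 0 ≠ f 2 ∧ f 1 ≠ f 2 := by
  refine ⟨fun h => ⟨h.ne (by decide), h.ne (by decide), h.ne (by decide)⟩, fun h i j hij => ?_⟩
  fin_cases i <;> fin_cases j <;> simp_all [eq_comm]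

theorem injective_fin_four_iff {α : Type*} (f : Fin 4 → α) :
    Function.Injective f ↔
      f 0 ≠ f 1 ∧ f 0 ≠ f 2 ∧ f 0 ≠ f 3 ∧ f 1 ≠ f 2 ∧ f 1 ≠ f 3 ∧ f 2 ≠ f 3 := by
  refine ⟨fun h => ⟨h.ne (by decide), h.ne (by decide), h.ne (by decide), h.ne (by decide),
    h.ne (by decide), h.ne (by decide)⟩, fun h i j hij => ?_⟩
  fin_cases i <;> fin_cases j <;> simp_all [eq_comm]

namespace SimpleGraph

variable (G : SimpleGraph V) [DecidableRel G.Adj]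

theorem sum_edgeFinset_lift_add {R : Type*} [AddCommMonoid R] (f : V → R) :
    ∑ e ∈ G.edgeFinset, Sym2.lift ⟨fun i j => f i + f j, fun _ _ => add_comm _ _⟩ e
      = ∑ i, ∑ j ∈ G.neighborFinset i, f j := by
  have hdarts : ∑ i, ∑ j ∈ G.neighborFinset i, f j
      = ∑ p ∈ univ.filter (fun p : V × V => G.Adj p.1 p.2), f p.2 := by
    simp only [sum_filter, Fintype.sum_prod_type, neighborFinset_eq_filter]
  rw [hdarts, ← sum_fiberwise_of_maps_to (g := fun p : V × V => s(p.1, p.2))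
    (t := G.edgeFinset) (by simp)]
  refine sum_congr rfl fun e he => ?_
  induction e with
  | h i j =>
    have hij : G.Adj i j := by simpa using he
    have hfiber : {p ∈ univ.filter (fun p : V × V => G.Adj p.1 p.2) | s(p.1, p.2) = s(i, j)}
        = {(i, j), (j, i)} := by
      ext ⟨a, b⟩
      simp only [mem_filter, mem_univ, true_and, mem_insert, mem_singleton, Sym2.eq_iff,
        Prod.mk.injEq]
      refine ⟨And.right, ?_⟩
      rintro (⟨rfl, rfl⟩ | ⟨rfl, rfl⟩) <;> simp [hij, hij.symm]
    rw [hfiber, sum_pair (by simp [hij.ne]), add_comm]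
    rfl

def walkTuples (n : ℕ) : Finset (Fin (n + 1) → V) :=
  univ.filter fun f => ∀ i : Fin n, G.Adj (f i.castSucc) (f i.succ)

omit [DecidableEq V] in
theorem mem_walkTuples_succ_iff {n : ℕ} (f : Fin (n + 2) → V) :
    f ∈ G.walkTuples (n + 1) ↔ G.Adj (f 0) (f 1) ∧ Fin.tail f ∈ G.walkTuples n := by
  simp [walkTuples, Fin.forall_fin_succ, Fin.tail]

theorem card_walkTuples_succ_start (n : ℕ) (i : V) :
    #{f ∈ G.walkTuples (n + 1) | f 0 = i}
      = ∑ j ∈ G.neighborFinset i, #{f ∈ G.walkTuples n | f 0 = j} := by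
  rw [card_eq_sum_card_fiberwise (f := fun f => f 1) (t := G.neighborFinset i) ?maps]
  case maps =>
    intro f hf
    obtain ⟨hw, rfl⟩ := mem_filter.1 (mem_coe.1 hf)
    exact (G.mem_neighborFinset _ _).2 ((G.mem_walkTuples_succ_iff f).1 hw).1
  refine sum_congr rfl fun j hj => card_nbij' Fin.tail (fun g => Fin.cons i g) ?_ ?_ ?_ ?_
  · intro f hf
    obtain ⟨⟨hw, -⟩, rfl⟩ := by simpa only [coe_filter, Set.mem_ofPred_eq, mem_filter] using hf
    exact mem_filter.2 ⟨((G.mem_walkTuples_succ_iff f).1 hw).2, rfl⟩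
  · intro g hg
    obtain ⟨hg, rfl⟩ := by simpa only [coe_filter, Set.mem_ofPred_eq] using hg
    simpa [G.mem_walkTuples_succ_iff] using And.intro hj hg
  · intro f hf
    obtain ⟨⟨-, rfl⟩, -⟩ := by simpa only [coe_filter, Set.mem_ofPred_eq, mem_filter] using hf
    exact Fin.cons_self_tail f
  · intro g _
    exact Fin.tail_cons _ _

theorem adjMatrix_pow_mulVec_one_apply {R : Type*} [Semiring R] (n : ℕ) (i : V) :
    (G.adjMatrix R ^ n *ᵥ fun _ => 1) i = #{f ∈ G.walkTuples n | f 0 = i} := by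
  induction n generalizing i with
  | zero =>
    have : {f ∈ G.walkTuples 0 | f 0 = i} = {fun _ => i} := by
      ext f
      simp [walkTuples, funext_iff, Fin.forall_fin_one]
    simp [this]
  | succ n ih =>
    rw [pow_succ', ← mulVec_mulVec, adjMatrix_mulVec_apply, card_walkTuples_succ_start]
    simp only [ih, Nat.cast_sum]

theorem sum_adjMatrix_pow_mulVec_one {R : Type*} [Semiring R] (n : ℕ) :
    ∑ i, (G.adjMatrix R ^ n *ᵥ fun _ => 1) i = #(G.walkTuples n) := by
  simp only [adjMatrix_pow_mulVec_one_apply, ← Nat.cast_sum]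
  rw [card_eq_sum_card_fiberwise (f := fun f => f 0) (t := univ) (by simp)]

omit [DecidableEq V] in
theorem mem_walkTuples_two (f : Fin 3 → V) :
    f ∈ G.walkTuples 2 ↔ G.Adj (f 0) (f 1) ∧ G.Adj (f 1) (f 2) := by
  simp [walkTuples, Fin.forall_fin_two]

omit [DecidableEq V] in
theorem mem_walkTuples_three (f : Fin 4 → V) :
    f ∈ G.walkTuples 3 ↔ G.Adj (f 0) (f 1) ∧ G.Adj (f 1) (f 2) ∧ G.Adj (f 2) (f 3) := by
  simp [walkTuples, Fin.forall_fin_succ]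

theorem labPath_eq_card_filter_injective (n : ℕ) :
    labPath G n = #{f ∈ G.walkTuples n | Function.Injective f} := by
  simp only [labPath, walkTuples, filter_filter, and_comm]

def labTriangles : Finset (Fin 3 → V) :=
  univ.filter fun f => Function.Injective f ∧
    G.Adj (f 0) (f 1) ∧ G.Adj (f 1) (f 2) ∧ G.Adj (f 2) (f 0)

theorem card_walkTuples_three_filter_edge :
    #{f ∈ G.walkTuples 3 | f 0 = f 2 ∧ f 1 = f 3} = 2 * #G.edgeFinset := by
  rw [two_mul_card_edgeFinset]
  refine card_nbij' (fun f => (f 0, f 1)) (fun p => ![p.1, p.2, p.1, p.2]) ?_ ?_ ?_ ?_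
  · intro f hf
    obtain ⟨⟨h01, -⟩, -⟩ := by simpa [mem_walkTuples_three] using hf
    simpa using h01
  · intro p hp
    have hp : G.Adj p.1 p.2 := by simpa using hp
    simp [mem_walkTuples_three, hp, hp.symm]
  · intro f hf
    obtain ⟨-, h02, h13⟩ := by simpa [mem_walkTuples_three] using hf
    funext i
    fin_cases i <;> simp [h02, h13]
  · intro p _
    simp

theorem card_walkTuples_three_filter_backtrack_first :
    #{f ∈ G.walkTuples 3 | f 0 = f 2 ∧ f 1 ≠ f 3} = labPath G 2 := by
  rw [labPath_eq_card_filter_injective]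
  refine card_nbij' (fun f => ![f 1, f 2, f 3]) (fun g => ![g 1, g 0, g 1, g 2]) ?_ ?_ ?_ ?_
  · intro f hf
    obtain ⟨⟨-, h12, h23⟩, -, h13⟩ := by simpa [mem_walkTuples_three] using hf
    simp [mem_walkTuples_two, injective_fin_three_iff, h12, h23, h12.ne, h23.ne, h13]
  · intro g hg
    obtain ⟨⟨h01, h12⟩, hg⟩ := by simpa [mem_walkTuples_two] using hg
    simp [mem_walkTuples_three, h01, h12, h01.symm, hg.ne (show (0 : Fin 3) ≠ 2 by decide)]
  · intro f hf
    obtain ⟨-, h02, -⟩ := by simpa [mem_walkTuples_three] using hf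
    funext i
    fin_cases i <;> simp [h02]
  · intro g _
    funext i
    fin_cases i <;> rfl

theorem card_walkTuples_three_filter_backtrack_last :
    #{f ∈ G.walkTuples 3 | f 0 ≠ f 2 ∧ f 1 = f 3} = labPath G 2 := by
  rw [labPath_eq_card_filter_injective]
  refine card_nbij' (fun f => ![f 0, f 1, f 2]) (fun g => ![g 0, g 1, g 2, g 1]) ?_ ?_ ?_ ?_
  · intro f hf
    obtain ⟨⟨h01, h12, -⟩, h02, -⟩ := by simpa [mem_walkTuples_three] using hf
    simp [mem_walkTuples_two, injective_fin_three_iff, h01, h12, h01.ne, h12.ne, h02]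
  · intro g hg
    obtain ⟨⟨h01, h12⟩, hg⟩ := by simpa [mem_walkTuples_two] using hg
    simp [mem_walkTuples_three, h01, h12, h12.symm, hg.ne (show (0 : Fin 3) ≠ 2 by decide)]
  · intro f hf
    obtain ⟨-, -, h13⟩ := by simpa [mem_walkTuples_three] using hf
    funext i
    fin_cases i <;> simp [h13]
  · intro g _
    funext i
    fin_cases i <;> rfl

theorem card_walkTuples_three_filter_triangle :
    #{f ∈ G.walkTuples 3 | f 0 ≠ f 2 ∧ f 1 ≠ f 3 ∧ f 0 = f 3} = #(G.labTriangles) := by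
  refine card_nbij' (fun f => ![f 0, f 1, f 2]) (fun g => ![g 0, g 1, g 2, g 0]) ?_ ?_ ?_ ?_
  · intro f hf
    obtain ⟨⟨h01, h12, h23⟩, h02, -, h03⟩ := by simpa [mem_walkTuples_three] using hf
    rw [← h03] at h23
    simp [labTriangles, injective_fin_three_iff, h01, h12, h01.ne, h12.ne, h02, h23]
  · intro g hg
    obtain ⟨hg, h01, h12, h20⟩ := by simpa [labTriangles] using hg
    simp [mem_walkTuples_three, h01, h12, h20, h01.ne', hg.ne (show (0 : Fin 3) ≠ 2 by decide)]
  · intro f hf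
    obtain ⟨-, -, -, h03⟩ := by simpa [mem_walkTuples_three] using hf
    funext i
    fin_cases i <;> simp [h03]
  · intro g _
    funext i
    fin_cases i <;> rfl

theorem card_walkTuples_three_filter_path :
    #{f ∈ G.walkTuples 3 | f 0 ≠ f 2 ∧ f 1 ≠ f 3 ∧ f 0 ≠ f 3} = labPath G 3 := by
  rw [labPath_eq_card_filter_injective]
  refine congrArg card (filter_congr fun f hf => ?_)
  obtain ⟨h01, h12, h23⟩ := (G.mem_walkTuples_three f).1 hf
  have := h01.ne; have := h12.ne; have := h23.ne
  rw [injective_fin_four_iff]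
  tauto

theorem card_walkTuples_three :
    #(G.walkTuples 3) = 2 * #G.edgeFinset + 2 * labPath G 2 + labPath G 3 + #G.labTriangles := by
  rw [← card_filter_add_card_filter_not (fun f : Fin 4 → V => f 0 = f 2),
    ← card_filter_add_card_filter_not (fun f : Fin 4 → V => f 1 = f 3),
    ← card_filter_add_card_filter_not (s := {f ∈ G.walkTuples 3 | f 0 ≠ f 2})
      (fun f : Fin 4 → V => f 1 = f 3),
    ← card_filter_add_card_filter_not (s := {f ∈ {f ∈ G.walkTuples 3 | f 0 ≠ f 2} | f 1 ≠ f 3})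
      (fun f : Fin 4 → V => f 0 = f 3)]
  simp only [filter_filter, ← ne_eq, and_assoc]
  rw [card_walkTuples_three_filter_edge, card_walkTuples_three_filter_backtrack_first,
    card_walkTuples_three_filter_backtrack_last, card_walkTuples_three_filter_triangle,
    card_walkTuples_three_filter_path]
  ring

end SimpleGraph

/-- `Σ_{(i,j)∈E} (k̃_i + k̃_j) = 2|P_1| + 4|P_2| + 2|P_3| + 6|C_3|`. -/
theorem edge_sum_two_walks_degrees_subgraphs (G : SimpleGraph V) [DecidableRel G.Adj] :
    ∑ e ∈ G.edgeFinset,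
        Sym2.lift ⟨fun i j => ((G.adjMatrix ℝ ^ 2) *ᵥ (fun _ => 1)) i
            + ((G.adjMatrix ℝ ^ 2) *ᵥ (fun _ => 1)) j,
          fun i j => by ring⟩ e
      = 2 * p1 G + 4 * p2 G + 2 * p3 G + 6 * c3 G := by
  rw [sum_edgeFinset_lift_add]
  simp only [← adjMatrix_mulVec_apply, mulVec_mulVec, ← pow_succ']
  rw [sum_adjMatrix_pow_mulVec_one, card_walkTuples_three, p1, p2, p3, c3, ← labTriangles]
  push_cast
  ring
end
end

section
/- Let G be a finite simple graph with adjacency matrix A. Then the number of 5-cycles satisfies |C_5| = (1/10)·tr(A⁵) − 3|C_3| − |S_{T1S}|, where |C_3| is the number of triangles and |S_{T1S}| is the number of triangles with one pendant edge (tadpole on 4 vertices). -/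
open Finset BigOperators Matrix SimpleGraph

noncomputable section

variable {V : Type*} [Fintype V] [DecidableEq V]

/-!
`tr(A⁵)` counts closed walks `(v₀, …, v₄)` of length 5, indices taken mod 5. Consecutive
vertices of a walk differ, so a closed 5-walk fails to be a 5-cycle only through coincidences
`vᵢ = vᵢ₊₂`; two coincidences two steps apart would make two adjacent vertices equal. Hence the
set of coincidences is empty, a single index (the walk runs once around a triangle with a
back-and-forth detour along a pendant edge: a labelled tadpole), or two consecutive indices
(a labelled triangle with one edge traversed three times). Counting the five rotations of each
shape gives `tr(A⁵) = 10 |C₅| + 5 · 2 |S_{T1S}| + 5 · 6 |C₃|`.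
-/

namespace Matrix

variable {ι R : Type*} [Fintype ι] [DecidableEq ι] [CommSemiring R]

theorem pow_succ_apply_eq_sum_prod (M : Matrix ι ι R) (k : ℕ) (u v : ι) :
    (M ^ (k + 1)) u v = ∑ g : Fin k → ι, ∏ i : Fin (k + 1),
      M ((Fin.cons u g : Fin (k + 1) → ι) i) ((Fin.snoc g v : Fin (k + 1) → ι) i) := by
  induction k generalizing u with
  | zero => simp [Fin.snoc]
  | succ k ih =>
    rw [pow_succ', mul_apply, ← (Fin.consEquiv fun _ => ι).sum_comp, Fintype.sum_prod_type]
    refine Finset.sum_congr rfl fun w _ => ?_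
    rw [ih, Finset.mul_sum]
    refine Finset.sum_congr rfl fun g _ => ?_
    simp [Fin.prod_univ_succ, Fin.consEquiv, ← Fin.cons_snoc_eq_snoc_cons]

theorem trace_pow_succ_eq_sum_prod (M : Matrix ι ι R) (k : ℕ) :
    trace (M ^ (k + 1)) = ∑ f : Fin (k + 1) → ι, ∏ i, M (f i) (f (i + 1)) := by
  have snoc_eq (u : ι) (g : Fin k → ι) (i : Fin (k + 1)) :
      (Fin.snoc g u : Fin (k + 1) → ι) i = (Fin.cons u g : Fin (k + 1) → ι) (i + 1) := by
    induction i using Fin.lastCases with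
    | last => simp [Fin.last_add_one]
    | cast j => simp [Fin.coeSucc_eq_succ]
  simp only [trace, diag, pow_succ_apply_eq_sum_prod, snoc_eq]
  rw [← (Fin.consEquiv fun _ => ι).sum_comp, Fintype.sum_prod_type]
  rfl

theorem injective_vecCons_three {β : Type*} {a b c : β} :
    Function.Injective ![a, b, c] ↔ a ≠ b ∧ a ≠ c ∧ b ≠ c := by
  simp only [vecCons, Fin.cons_injective_iff, Set.mem_range, Fin.exists_fin_succ, Fin.cons_zero,
    Fin.cons_succ, IsEmpty.exists_iff, Function.injective_of_subsingleton]
  grind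

theorem injective_vecCons_four {β : Type*} {a b c d : β} :
    Function.Injective ![a, b, c, d] ↔ a ≠ b ∧ a ≠ c ∧ a ≠ d ∧ b ≠ c ∧ b ≠ d ∧ c ≠ d := by
  simp only [vecCons, Fin.cons_injective_iff, Set.mem_range, Fin.exists_fin_succ, Fin.cons_zero,
    Fin.cons_succ, IsEmpty.exists_iff, Function.injective_of_subsingleton]
  grind

end Matrix

/-- A set of residues mod 5 containing no two elements two apart is empty, a singleton, or
two neighbours. -/
theorem Fin.five_indicator_sum_eq_one_of_no_two_apart (c : Fin 5 → Bool)
    (h : ∀ i, ¬(c i ∧ c (i + 2))) :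
    ((if ∀ i, c i = false then 1 else 0) +
      ∑ i, (if c i ∧ c (i + 1) = false ∧ c (i + 4) = false then 1 else 0) +
      ∑ i, (if c i ∧ c (i + 1) then 1 else 0) : ℕ) = 1 := by
  revert c
  decide

namespace SimpleGraph

variable {α : Type*} [Fintype α] (G : SimpleGraph α) [DecidableRel G.Adj]

def closedWalkTuples (n : ℕ) [NeZero n] : Finset (Fin n → α) :=
  {f | ∀ i, G.Adj (f i) (f (i + 1))}

@[simp]
theorem mem_closedWalkTuples {n : ℕ} [NeZero n] {f : Fin n → α} :
    f ∈ G.closedWalkTuples n ↔ ∀ i, G.Adj (f i) (f (i + 1)) := by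
  simp [closedWalkTuples]

theorem trace_adjMatrix_pow [DecidableEq α] {R : Type*} [CommSemiring R] (n : ℕ) [NeZero n] :
    trace (G.adjMatrix R ^ n) = #(G.closedWalkTuples n) := by
  obtain ⟨k, rfl⟩ := Nat.exists_eq_add_one_of_ne_zero (NeZero.ne n)
  rw [trace_pow_succ_eq_sum_prod]
  simp only [adjMatrix_apply, Fintype.prod_boole, closedWalkTuples]
  convert Finset.sum_boole (R := R) _ _

theorem card_filter_closedWalkTuples_rotate {n : ℕ} [NeZero n] (p : (Fin n → α) → Prop)
    [DecidablePred p] (j : Fin n) :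
    #{f ∈ G.closedWalkTuples n | p fun i => f (j + i)} = #{f ∈ G.closedWalkTuples n | p f} := by
  refine card_nbij' (fun f i => f (j + i)) (fun f i => f (-j + i)) ?_ ?_ ?_ ?_ <;>
    intro f hf <;> simp_all [← add_assoc]

theorem mem_closedWalkTuples_five {f : Fin 5 → α} :
    f ∈ G.closedWalkTuples 5 ↔ G.Adj (f 0) (f 1) ∧ G.Adj (f 1) (f 2) ∧ G.Adj (f 2) (f 3) ∧
      G.Adj (f 3) (f 4) ∧ G.Adj (f 4) (f 0) := by
  simp [closedWalkTuples, Fin.forall_fin_succ]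

variable {G}

theorem ne_add_two_add_two_of_mem_closedWalkTuples_five {f : Fin 5 → α}
    (hf : f ∈ G.closedWalkTuples 5) {i : Fin 5} (hi : f i = f (i + 2)) :
    f (i + 2) ≠ f (i + 2 + 2) := by
  have hadj := G.mem_closedWalkTuples.1 hf (i + 2 + 2)
  rw [show i + 2 + 2 + 1 = i by abel] at hadj
  exact fun h => hadj.ne (hi.trans h).symm

theorem injective_iff_of_mem_closedWalkTuples_five {f : Fin 5 → α}
    (hf : f ∈ G.closedWalkTuples 5) : Function.Injective f ↔ ∀ i, f i ≠ f (i + 2) := by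
  have hadj := G.mem_closedWalkTuples.1 hf
  refine ⟨fun hinj i => hinj.ne (by simp), fun h2 i j hij => ?_⟩
  obtain ⟨d, rfl⟩ : ∃ d, j = i + d := ⟨j - i, by abel⟩
  have hd : d = 0 ∨ d = 1 ∨ d = 2 ∨ d = 3 ∨ d = 4 := by fin_cases d <;> simp
  rcases hd with rfl | rfl | rfl | rfl | rfl
  · simp
  · exact absurd hij (hadj i).ne
  · exact absurd hij (h2 i)
  · exact absurd hij (by simpa [show i + 3 + 2 = i by abel, eq_comm] using h2 (i + 3))
  · exact absurd hij (by simpa [show i + 4 + 1 = i by abel, eq_comm] using (hadj (i + 4)).ne)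

theorem ite_injective_add_sum_add_sum_eq_one_of_mem_closedWalkTuples_five [DecidableEq α]
    {f : Fin 5 → α} (hf : f ∈ G.closedWalkTuples 5) :
    ((if Function.Injective f then 1 else 0) +
      ∑ i, (if f i = f (i + 2) ∧ f (i + 1) ≠ f (i + 3) ∧ f (i + 4) ≠ f (i + 1) then 1 else 0) +
      ∑ i, (if f i = f (i + 2) ∧ f (i + 1) = f (i + 3) then 1 else 0) : ℕ) = 1 := by
  have := Fin.five_indicator_sum_eq_one_of_no_two_apart (fun i => decide (f i = f (i + 2)))
    (by simpa using fun i => ne_add_two_add_two_of_mem_closedWalkTuples_five hf)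
  simpa [injective_iff_of_mem_closedWalkTuples_five hf, add_assoc] using this

variable (G)

theorem card_closedWalkTuples_five [DecidableEq α] :
    #(G.closedWalkTuples 5) = #{f ∈ G.closedWalkTuples 5 | Function.Injective f} +
      5 * #{f ∈ G.closedWalkTuples 5 | f 0 = f 2 ∧ f 1 ≠ f 3 ∧ f 4 ≠ f 1} +
      5 * #{f ∈ G.closedWalkTuples 5 | f 0 = f 2 ∧ f 1 = f 3} := by
  have hshift (p : (Fin 5 → α) → Prop) [DecidablePred p] :
      ∑ i, #{f ∈ G.closedWalkTuples 5 | p fun k => f (i + k)} =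
        5 * #{f ∈ G.closedWalkTuples 5 | p f} := by
    simp [card_filter_closedWalkTuples_rotate]
  have hT := hshift fun g => g 0 = g 2 ∧ g 1 ≠ g 3 ∧ g 4 ≠ g 1
  have hC := hshift fun g => g 0 = g 2 ∧ g 1 = g 3
  simp only [add_zero] at hT hC
  rw [card_eq_sum_ones, ← hT, ← hC, ← sum_congr rfl fun f hf =>
    ite_injective_add_sum_add_sum_eq_one_of_mem_closedWalkTuples_five hf,
    sum_add_distrib, sum_add_distrib, sum_comm (s := G.closedWalkTuples 5),
    sum_comm (s := G.closedWalkTuples 5)]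
  simp only [sum_boole, Nat.cast_id]

theorem card_filter_closedWalkTuples_five_tadpole [DecidableEq α] :
    #{f ∈ G.closedWalkTuples 5 | f 0 = f 2 ∧ f 1 ≠ f 3 ∧ f 4 ≠ f 1} =
      #{g : Fin 4 → α | Function.Injective g ∧ G.Adj (g 0) (g 1) ∧ G.Adj (g 1) (g 2) ∧
        G.Adj (g 2) (g 0) ∧ G.Adj (g 0) (g 3)} := by
  refine card_nbij' (fun f => ![f 0, f 3, f 4, f 1]) (fun g => ![g 0, g 3, g 0, g 1, g 2])
    ?_ ?_ ?_ ?_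
  · rintro f hf
    simp only [mem_coe, mem_filter, mem_univ, true_and, mem_closedWalkTuples_five] at hf ⊢
    obtain ⟨⟨h01, -, h23, h34, h40⟩, h02, h13, h41⟩ := hf
    rw [← h02] at h23
    exact ⟨Matrix.injective_vecCons_four.2 ⟨h23.ne, h40.ne.symm, h01.ne, h34.ne, h13.symm, h41⟩,
      h23, h34, h40, h01⟩
  · rintro g hg
    simp only [mem_coe, mem_filter, mem_univ, true_and, mem_closedWalkTuples_five] at hg ⊢
    obtain ⟨hinj, h01, h12, h20, h03⟩ := hg
    exact ⟨⟨h03, h03.symm, h01, h12, h20⟩, rfl, hinj.ne (by decide), hinj.ne (by decide)⟩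
  · rintro f hf
    simp only [mem_coe, mem_filter] at hf
    funext i
    fin_cases i <;> simp [hf.2.1]
  · rintro g -
    funext i
    fin_cases i <;> rfl

theorem card_filter_closedWalkTuples_five_triangle [DecidableEq α] :
    #{f ∈ G.closedWalkTuples 5 | f 0 = f 2 ∧ f 1 = f 3} =
      #{g : Fin 3 → α | Function.Injective g ∧ G.Adj (g 0) (g 1) ∧ G.Adj (g 1) (g 2) ∧
        G.Adj (g 2) (g 0)} := by
  refine card_nbij' (fun f => ![f 0, f 1, f 4]) (fun g => ![g 0, g 1, g 0, g 1, g 2])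
    ?_ ?_ ?_ ?_
  · rintro f hf
    simp only [mem_coe, mem_filter, mem_univ, true_and, mem_closedWalkTuples_five] at hf ⊢
    obtain ⟨⟨h01, -, -, h34, h40⟩, -, h13⟩ := hf
    rw [← h13] at h34
    exact ⟨Matrix.injective_vecCons_three.2 ⟨h01.ne, h40.ne.symm, h34.ne⟩, h01, h34, h40⟩
  · rintro g hg
    simp only [mem_coe, mem_filter, mem_univ, true_and, mem_closedWalkTuples_five] at hg ⊢
    obtain ⟨-, h01, h12, h20⟩ := hg
    exact ⟨⟨h01, h01.symm, h01, h12, h20⟩, rfl, rfl⟩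
  · rintro f hf
    simp only [mem_coe, mem_filter] at hf
    funext i
    fin_cases i <;> simp [hf.2.1, hf.2.2]
  · rintro g -
    funext i
    fin_cases i <;> rfl

end SimpleGraph

/-- `|C_5| = (1/10)·tr(A⁵) − 3|C_3| − |S_{T1S}|`. -/
theorem c5_eq (G : SimpleGraph V) [DecidableRel G.Adj] :
    c5 G = (1 / 10) * Matrix.trace (G.adjMatrix ℝ ^ 5) - 3 * c3 G - sT1S G := by
  have hc5 : c5 G = #{f ∈ G.closedWalkTuples 5 | Function.Injective f} / 10 := by
    rw [c5]
    congr 3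
    ext f
    simp only [mem_filter, mem_univ, true_and, mem_closedWalkTuples_five]
    tauto
  rw [hc5, c3, sT1S, trace_adjMatrix_pow, card_closedWalkTuples_five,
    card_filter_closedWalkTuples_five_tadpole, card_filter_closedWalkTuples_five_triangle]
  push_cast
  ring
end
end
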